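/- arXiv:2005.12814 — 3 statements merged into one kernel-verified Lean document; each statement's English description precedes it below -/
import Mathlib

section
/- Let p : ℕ → ℕ be given by a polynomial of degree n ≥ 2 with non-negative integer coefficients and linear coefficient at least 1. Then the real number ∑_{k ≥ 1} 1 / 2^{p(k)} is irrational. -/
/-!
If `x = ∑ b ^ (-q k)` were a rational `a / d`, then for every `K` the number `d b ^ (q K) x` would
be an integer, and so would `d b ^ (q K)` times the partial sum up to `K`. Their difference
`d b ^ (q K) ∑_{k > K} b ^ (-q k)` is positive and at most `2 d b ^ (q K - q (K + 1))`, which is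
below `1` as soon as the gap `q (K + 1) - q K` exceeds `d`. For `q k = p (k + 1)` with
`deg p ≥ 2` the gaps are at least `2 k + 3`.
-/

open Finset Polynomial

theorem Nat.pow_add_two_mul_add_one_le (k : ℕ) {d : ℕ} (hd : 2 ≤ d) :
    k ^ d + (2 * k + 1) ≤ (k + 1) ^ d := by
  obtain ⟨e, rfl⟩ := Nat.exists_eq_add_of_le' hd
  have hmono : k ^ e ≤ (k + 1) ^ e := Nat.pow_le_pow_left k.le_succ e
  have hone : 1 ≤ (k + 1) ^ e := Nat.one_le_pow _ _ k.succ_pos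
  calc k ^ (e + 2) + (2 * k + 1) = k ^ e * k ^ 2 + 1 * (2 * k + 1) := by ring
    _ ≤ (k + 1) ^ e * k ^ 2 + (k + 1) ^ e * (2 * k + 1) := by gcongr
    _ = (k + 1) ^ (e + 2) := by ring

theorem Polynomial.monotone_eval_nat (p : ℕ[X]) : Monotone fun x : ℕ => p.eval x := by
  induction p using Polynomial.induction_on' with
  | add p q hp hq => exact fun x y h => by simpa using add_le_add (hp h) (hq h)
  | monomial n a =>
    exact fun x y h => by simpa using Nat.mul_le_mul_left a (Nat.pow_le_pow_left h n)

theorem Polynomial.eval_add_two_mul_add_one_le_eval_succ (p : ℕ[X]) (hp : 2 ≤ p.natDegree)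
    (k : ℕ) : p.eval k + (2 * k + 1) ≤ p.eval (k + 1) := by
  have hlead : 1 ≤ p.leadingCoeff :=
    Nat.one_le_iff_ne_zero.2 (leadingCoeff_ne_zero.2 (ne_zero_of_natDegree_gt hp))
  have hlow := p.eraseLead.monotone_eval_nat (Nat.le_add_right k 1)
  have htop : p.leadingCoeff * k ^ p.natDegree + (2 * k + 1) ≤
      p.leadingCoeff * (k + 1) ^ p.natDegree :=
    calc p.leadingCoeff * k ^ p.natDegree + (2 * k + 1)
        ≤ p.leadingCoeff * k ^ p.natDegree + p.leadingCoeff * (2 * k + 1) := by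
          gcongr; exact Nat.le_mul_of_pos_left _ hlead
      _ = p.leadingCoeff * (k ^ p.natDegree + (2 * k + 1)) := by ring
      _ ≤ p.leadingCoeff * (k + 1) ^ p.natDegree := by
          gcongr; exact Nat.pow_add_two_mul_add_one_le k hp
  rw [← p.eraseLead_add_monomial_natDegree_leadingCoeff]
  simp only [eval_add, eval_monomial] at hlow ⊢
  omega

theorem irrational_of_forall_exists_int_lt_mul_lt (x : ℝ)
    (h : ∀ d : ℕ, 0 < d → ∃ (N : ℕ) (c : ℤ), c < d * N * x ∧ d * N * x < c + 1) :
    Irrational x := by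
  rintro ⟨r, rfl⟩
  obtain ⟨N, c, hlo, hhi⟩ := h r.den r.pos
  have hint : (r.den * N * r : ℝ) = ((N * r.num : ℤ) : ℝ) := by
    push_cast
    rw [Rat.cast_def]
    field_simp
  rw [hint] at hlo hhi
  have hlo' := Int.cast_lt.1 hlo
  have hhi' : N * r.num < c + 1 := by exact_mod_cast hhi
  omega

section BaseExpansion

variable {b : ℕ} {q : ℕ → ℕ}

theorem exists_natCast_eq_pow_mul_sum_one_div_pow (hb : b ≠ 0) (hq : Monotone q) (K : ℕ) :
    ∃ n : ℕ, (n : ℝ) = b ^ q K * ∑ k ∈ range (K + 1), 1 / (b : ℝ) ^ q k := by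
  refine ⟨∑ k ∈ range (K + 1), b ^ (q K - q k), ?_⟩
  push_cast
  rw [mul_sum]
  refine sum_congr rfl fun k hk => ?_
  rw [pow_sub₀ _ (by positivity) (hq (Nat.lt_succ_iff.1 (mem_range.1 hk))), div_eq_mul_inv,
    one_mul]

theorem one_div_pow_le_one_div_pow_mul_half_pow (hb : 2 ≤ b) (hq : StrictMono q) (n j : ℕ) :
    1 / (b : ℝ) ^ q (j + n) ≤ 1 / (b : ℝ) ^ q n * (1 / 2) ^ j := by
  have hb' : (2 : ℝ) ≤ b := by exact_mod_cast hb
  calc 1 / (b : ℝ) ^ q (j + n) ≤ 1 / (b : ℝ) ^ (q n + j) :=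
        one_div_pow_le_one_div_pow_of_le (by linarith) (by have := hq.add_le_nat j n; omega)
    _ = 1 / (b : ℝ) ^ q n * (1 / b) ^ j := by rw [pow_add, one_div_pow, one_div_mul_one_div]
    _ ≤ 1 / (b : ℝ) ^ q n * (1 / 2) ^ j := by gcongr

theorem summable_one_div_pow (hb : 2 ≤ b) (hq : StrictMono q) :
    Summable fun k => 1 / (b : ℝ) ^ q k :=
  Summable.of_nonneg_of_le (fun _ => by positivity)
    (fun k => by simpa using one_div_pow_le_one_div_pow_mul_half_pow hb hq 0 k)
    (summable_geometric_two.mul_left _)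

theorem tsum_one_div_pow_add_le (hb : 2 ≤ b) (hq : StrictMono q) (n : ℕ) :
    ∑' j, 1 / (b : ℝ) ^ q (j + n) ≤ 2 / (b : ℝ) ^ q n :=
  calc ∑' j, 1 / (b : ℝ) ^ q (j + n) ≤ ∑' j, 1 / (b : ℝ) ^ q n * (1 / 2) ^ j :=
        Summable.tsum_le_tsum (one_div_pow_le_one_div_pow_mul_half_pow hb hq n)
          ((summable_nat_add_iff n).2 (summable_one_div_pow hb hq))
          (summable_geometric_two.mul_left _)
    _ = 2 / (b : ℝ) ^ q n := by rw [tsum_mul_left, tsum_geometric_two]; ring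

theorem mul_pow_mul_tsum_one_div_pow_lt_one (hb : 2 ≤ b) (hq : StrictMono q) {d K : ℕ}
    (hK : q K + (d + 1) ≤ q (K + 1)) :
    d * (b : ℝ) ^ q K * ∑' j, 1 / (b : ℝ) ^ q (j + (K + 1)) < 1 := by
  have hpow : (2 * d : ℝ) < (b : ℝ) ^ (d + 1) := by
    have h2d : 2 * d < 2 ^ (d + 1) := by have := Nat.lt_two_pow_self (n := d); rw [pow_succ]; omega
    exact_mod_cast h2d.trans_le (Nat.pow_le_pow_left hb _)
  have hgapK : (b : ℝ) ^ q K * (b : ℝ) ^ (d + 1) ≤ (b : ℝ) ^ q (K + 1) := by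
    rw [← pow_add]
    exact pow_le_pow_right₀ (by exact_mod_cast (by omega : 1 ≤ b)) hK
  calc d * (b : ℝ) ^ q K * ∑' j, 1 / (b : ℝ) ^ q (j + (K + 1))
        ≤ d * (b : ℝ) ^ q K * (2 / (b : ℝ) ^ q (K + 1)) := by
          gcongr; exact tsum_one_div_pow_add_le hb hq (K + 1)
    _ ≤ d * (b : ℝ) ^ q K * (2 / ((b : ℝ) ^ q K * (b : ℝ) ^ (d + 1))) := by gcongr
    _ = 2 * d / (b : ℝ) ^ (d + 1) := by field_simp
    _ < 1 := (div_lt_one (by positivity)).2 hpow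

theorem irrational_tsum_one_div_pow (hb : 2 ≤ b) (hq : StrictMono q)
    (hgap : ∀ m, ∃ k, q k + m ≤ q (k + 1)) : Irrational (∑' k, 1 / (b : ℝ) ^ q k) := by
  refine irrational_of_forall_exists_int_lt_mul_lt _ fun d hd => ?_
  obtain ⟨K, hK⟩ := hgap (d + 1)
  obtain ⟨n, hn⟩ := exists_natCast_eq_pow_mul_sum_one_div_pow (by omega : b ≠ 0) hq.monotone K
  set T := ∑' j, 1 / (b : ℝ) ^ q (j + (K + 1))
  have hsplit : ∑' k, 1 / (b : ℝ) ^ q k = ∑ k ∈ range (K + 1), 1 / (b : ℝ) ^ q k + T :=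
    ((summable_one_div_pow hb hq).sum_add_tsum_nat_add (K + 1)).symm
  have hT_pos : 0 < T := Summable.tsum_pos ((summable_nat_add_iff (K + 1)).2
    (summable_one_div_pow hb hq)) (fun _ => by positivity) 0 (by positivity)
  have hT_lt := mul_pow_mul_tsum_one_div_pow_lt_one hb hq hK
  have hT_scaled_pos : 0 < d * (b : ℝ) ^ q K * T := by
    have : (0 : ℝ) < d := by exact_mod_cast hd
    positivity
  have hscaled : (d : ℝ) * ((b ^ q K : ℕ) : ℝ) * ∑' k, 1 / (b : ℝ) ^ q k =
      (((d : ℤ) * n : ℤ) : ℝ) + d * (b : ℝ) ^ q K * T := by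
    rw [hsplit]
    push_cast
    rw [hn]
    ring
  exact ⟨b ^ q K, d * n, by rw [hscaled]; linarith, by rw [hscaled]; linarith⟩

end BaseExpansion

theorem irrational_sum_poly_general (p : Polynomial ℕ) (hdeg : 2 ≤ p.natDegree) :
    Irrational (∑' k : ℕ, (1 : ℝ) / 2 ^ (p.eval (k + 1))) := by
  have hgap (k : ℕ) : p.eval (k + 1) + (2 * k + 3) ≤ p.eval (k + 1 + 1) :=
    p.eval_add_two_mul_add_one_le_eval_succ hdeg (k + 1)
  have hq : StrictMono fun k => p.eval (k + 1) :=
    strictMono_nat_of_lt_succ fun k => by have := hgap k; omega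
  simpa using irrational_tsum_one_div_pow le_rfl hq fun m => ⟨m, by have := hgap m; omega⟩

/-- If `p` is a polynomial of degree `n ≥ 2` with non-negative integer
coefficients and linear coefficient at least `1`, then `∑_{k ≥ 1} 1/2^(p k)` is
irrational. -/
theorem irrational_sum_poly (p : Polynomial ℕ) (hdeg : 2 ≤ p.natDegree)
    (hlin : 1 ≤ p.coeff 1) :
    Irrational (∑' k : ℕ, (1 : ℝ) / 2 ^ (p.eval (k + 1))) :=
  irrational_sum_poly_general p hdeg
end

section
/- Let p : ℕ → ℕ be a polynomial with non-negative integer coefficients of degree at least 1, and let d ≥ 2 be a natural number. Then ∑_{k ≥ 1} 1 / 2^{k + p(k) d^k} is irrational. -/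
/-!
If `x = ∑ b^(-e k)` had denominator `q`, then for every `n` the number
`b^(e n) x - b^(e n) ∑_{k ≤ n} b^(-e k)` would be a positive multiple of `1/q`. It is `b^(e n)`
times the tail, hence at most `2 b^(e n - e (n+1))`, which is below `1/q` as soon as the gap
`e (n+1) - e n` is large. For `e k = k + p(k) d^k` the gaps grow at least linearly in `k`.
-/

open Polynomial Finset

theorem irrational_of_forall_exists_int_approx {x : ℝ}
    (h : ∀ ε > 0, ∃ (m : ℕ) (a : ℤ), 0 < m * x - a ∧ m * x - a < ε) : Irrational x := by
  rintro ⟨q, rfl⟩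
  obtain ⟨m, a, hpos, hlt⟩ := h (1 / q.den) (by positivity)
  have hden : (0 : ℝ) < q.den := by positivity
  have hint : (q.den : ℝ) * (m * q - a) = ((m * q.num - a * q.den : ℤ) : ℝ) := by
    rw [Rat.cast_def]; push_cast; field_simp
  have hpos' : (0 : ℝ) < ((m * q.num - a * q.den : ℤ) : ℝ) := hint ▸ mul_pos hden hpos
  have hlt' : ((m * q.num - a * q.den : ℤ) : ℝ) < 1 := by
    calc _ = (q.den : ℝ) * (m * q - a) := hint.symm
      _ < (q.den : ℝ) * (1 / q.den) := by gcongr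
      _ = 1 := by field_simp
  have : (0 : ℤ) < m * q.num - a * q.den := by exact_mod_cast hpos'
  have : m * q.num - a * q.den < (1 : ℤ) := by exact_mod_cast hlt'
  omega

theorem Polynomial.eval_monotone {R : Type*} [CommSemiring R] [PartialOrder R]
    [CanonicallyOrderedAdd R] [IsOrderedRing R] (p : R[X]) : Monotone fun x => p.eval x := by
  intro x y hxy
  simp only [eval_eq_sum_range]
  gcongr

theorem Polynomial.one_le_eval_of_ne_zero {p : ℕ[X]} (hp : p ≠ 0) {n : ℕ} (hn : 1 ≤ n) :
    1 ≤ p.eval n := by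
  rw [eval_eq_sum_range]
  calc 1 ≤ p.leadingCoeff * n ^ p.natDegree :=
        Nat.one_le_iff_ne_zero.mpr (mul_ne_zero (leadingCoeff_ne_zero.mpr hp) (by positivity))
    _ ≤ ∑ i ∈ range (p.natDegree + 1), p.coeff i * n ^ i :=
        single_le_sum (f := fun i => p.coeff i * n ^ i) (fun i _ => Nat.zero_le _)
          (self_mem_range_succ _)

section
variable {b : ℕ} {e : ℕ → ℕ}

theorem pow_mul_sum_one_div_pow_eq_natCast (hb : b ≠ 0) (he : Monotone e) (n : ℕ) :
    (b : ℝ) ^ e n * ∑ k ∈ range (n + 1), 1 / (b : ℝ) ^ e k =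
      ((∑ k ∈ range (n + 1), b ^ (e n - e k) : ℕ) : ℝ) := by
  rw [mul_sum]
  push_cast
  refine sum_congr rfl fun k hk => ?_
  have hle : e k ≤ e n := he (by simpa [Nat.lt_succ_iff] using hk)
  rw [mul_one_div, div_eq_iff (by positivity), ← pow_add, Nat.sub_add_cancel hle]

theorem summable_one_div_pow_comp (hb : 1 < b) (he : StrictMono e) :
    Summable fun k => 1 / (b : ℝ) ^ e k := by
  have hb' : (1 : ℝ) < b := by exact_mod_cast hb
  have := (summable_geometric_of_lt_one (by positivity)
    ((div_lt_one (by positivity)).mpr hb')).comp_injective he.injective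
  simpa only [Function.comp_def, one_div_pow] using this

theorem tsum_one_div_pow_comp_add_le (hb : 1 < b) (he : StrictMono e) (n : ℕ) :
    ∑' k, 1 / (b : ℝ) ^ e (k + n) ≤ 2 / (b : ℝ) ^ e n := by
  have hb' : (2 : ℝ) ≤ b := by exact_mod_cast hb
  have hr0 : (0 : ℝ) ≤ 1 / b := by positivity
  have hr1 : (1 : ℝ) / b < 1 := (div_lt_one (by positivity)).mpr (by linarith)
  calc ∑' k, 1 / (b : ℝ) ^ e (k + n) ≤ ∑' k, 1 / (b : ℝ) ^ e n * (1 / b) ^ k := by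
        refine (summable_one_div_pow_comp hb (he.comp (strictMono_id.add_const n))).tsum_le_tsum
          (fun k => ?_) ((summable_geometric_of_lt_one hr0 hr1).mul_left _)
        rw [one_div_pow, one_div_mul_one_div, ← pow_add]
        gcongr
        · exact_mod_cast hb.le
        · exact add_comm k (e n) ▸ he.add_le_nat k n
    _ = 1 / (b : ℝ) ^ e n * (1 - 1 / (b : ℝ))⁻¹ := by
        rw [tsum_mul_left, tsum_geometric_of_lt_one hr0 hr1]
    _ ≤ 2 / (b : ℝ) ^ e n := by
        rw [one_div_mul_eq_div]
        gcongr
        rw [inv_le_comm₀ (by linarith) (by norm_num), le_sub_comm, div_le_iff₀ (by positivity)]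
        linarith

theorem irrational_tsum_one_div_pow_of_unbounded_gaps (hb : 1 < b) (he : StrictMono e)
    (hgap : ∀ C, ∃ n, e n + C ≤ e (n + 1)) : Irrational (∑' k, 1 / (b : ℝ) ^ e k) := by
  refine irrational_of_forall_exists_int_approx fun ε hε => ?_
  have hb0 : (0 : ℝ) < b := by positivity
  obtain ⟨C, hC⟩ : ∃ C : ℕ, (1 / b : ℝ) ^ C < ε / 2 :=
    exists_pow_lt_of_lt_one (by positivity) ((div_lt_one hb0).mpr (by exact_mod_cast hb))
  obtain ⟨n, hn⟩ := hgap C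
  set tail := ∑' k, 1 / (b : ℝ) ^ e (k + (n + 1))
  have hsplit := (summable_one_div_pow_comp hb he).sum_add_tsum_nat_add (n + 1)
  have hdiff : ((b ^ e n : ℕ) : ℝ) * ∑' k, 1 / (b : ℝ) ^ e k
      - ((∑ k ∈ range (n + 1), b ^ (e n - e k) : ℕ) : ℤ) = b ^ e n * tail := by
    rw [← hsplit, Int.cast_natCast, Nat.cast_pow,
      ← pow_mul_sum_one_div_pow_eq_natCast (by omega) he.monotone]
    ring
  refine ⟨b ^ e n, ((∑ k ∈ range (n + 1), b ^ (e n - e k) : ℕ) : ℤ), ?_, ?_⟩ <;> rw [hdiff]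
  · exact mul_pos (by positivity)
      (((summable_nat_add_iff _).mpr (summable_one_div_pow_comp hb he)).tsum_pos
        (fun _ => by positivity) 0 (by positivity))
  · calc (b : ℝ) ^ e n * tail ≤ b ^ e n * (2 / b ^ e (n + 1)) := by
          gcongr; exact tsum_one_div_pow_comp_add_le hb he (n + 1)
      _ ≤ b ^ e n * (2 / b ^ (e n + C)) := by
          gcongr
          exact_mod_cast hb.le
      _ = 2 * (1 / b) ^ C := by
          rw [pow_add, one_div_pow]; field_simp
      _ < ε := by linarith

end

theorem add_mul_pow_add_lt_succ {P : ℕ → ℕ} (hP : Monotone P) {d : ℕ} (hd : 2 ≤ d) {k : ℕ}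
    (hk : 1 ≤ P k) : k + P k * d ^ k + k < (k + 1) + P (k + 1) * d ^ (k + 1) := by
  have hpow : k < d ^ k := Nat.lt_pow_self (by omega)
  have hdk : d ^ k ≤ P k * d ^ k := Nat.le_mul_of_pos_left _ hk
  have hdouble : 2 * (P k * d ^ k) ≤ P (k + 1) * d ^ (k + 1) :=
    calc 2 * (P k * d ^ k) ≤ P (k + 1) * (d ^ k * d) := by
          rw [mul_comm 2, mul_assoc]; gcongr; exact hP k.le_succ
      _ = P (k + 1) * d ^ (k + 1) := by rw [pow_succ]
  omega

/-- If `p` is a polynomial with non-negative integer coefficients of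
degree at least `1` and `d ≥ 2`, then `∑_{k ≥ 1} 1/2^(k + p(k)·d^k)` is irrational. -/
theorem irrational_sum_poly_exp (p : Polynomial ℕ) (hdeg : 1 ≤ p.natDegree)
    (d : ℕ) (hd : 2 ≤ d) :
    Irrational (∑' k : ℕ, (1 : ℝ) / 2 ^ ((k + 1) + p.eval (k + 1) * d ^ (k + 1))) := by
  have hp : p ≠ 0 := by rintro rfl; simp at hdeg
  have hgap (k : ℕ) : (k + 1) + p.eval (k + 1) * d ^ (k + 1) + k <
      (k + 1 + 1) + p.eval (k + 1 + 1) * d ^ (k + 1 + 1) := by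
    have := add_mul_pow_add_lt_succ p.eval_monotone hd
      (p.one_le_eval_of_ne_zero hp (Nat.le_add_left 1 k))
    omega
  exact_mod_cast irrational_tsum_one_div_pow_of_unbounded_gaps (b := 2) one_lt_two
    (strictMono_nat_of_lt_succ fun k => by have := hgap k; omega)
    fun C => ⟨C, by have := hgap C; omega⟩
end

section
/- Let K(t) be the field of rational functions over a field K. For every nonzero Laurent polynomial q(t) ∈ K[t^p, t^{-p}] and every multiple P = p·n of p (n ≥ 2), the image of q(t)·Id under the block embedding M_p(K[t^p, t^{-p}]) → M_P(K[t^P, t^{-P}]) (which sends t^p·Id_p to the P×P block companion-type matrix with Id_p on the subdiagonal blocks and t^P·Id_p in the top-right block) is an invertible matrix over K(t^P). -/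
/-!
The block matrix `C` is the weighted cyclic shift `e_k ↦ e_{k+p}`, with weight `t^P` on the
indices that wrap around. Composing two such shifts adds the offsets, so `C^n = t^P` and the
inverse of `C` is again a (transposed) weighted shift. A nonzero Laurent polynomial `q`, times a
power of `C`, becomes a nonzero polynomial `f` with coefficients in `K`, and `f(C)` is invertible
because `f` is coprime to `X^n - t^P` over `K(t)`: a common root in an algebraic closure would be
algebraic over `K` with `n`-th power `t^P`, contradicting the transcendence of `t`.
-/

open Polynomial
open scoped Matrix

def weightedShift {R : Type*} [Zero R] [One R] (P : ℕ) (s : R) (d : ℕ) :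
    Matrix (Fin P) (Fin P) R :=
  Matrix.of fun i k =>
    if (i : ℕ) = (k : ℕ) + d then 1 else if (i : ℕ) + P = (k : ℕ) + d then s else 0

section weightedShift

variable {R : Type*} [Semiring R] {P : ℕ} (s : R)

theorem weightedShift_zero : weightedShift P s 0 = 1 := by
  ext i k
  have := k.isLt
  simp only [weightedShift, Matrix.of_apply, Matrix.one_apply, add_zero, Fin.val_inj]
  split_ifs <;> first | rfl | omega

theorem weightedShift_self : weightedShift P s P = s • 1 := by
  ext i k
  have := i.isLt
  simp only [weightedShift, Matrix.of_apply, Matrix.smul_apply, Matrix.one_apply, smul_eq_mul,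
    mul_ite, mul_one, mul_zero, add_left_inj, Fin.val_inj]
  split_ifs <;> first | rfl | omega

theorem weightedShift_mul {d e : ℕ} (hde : d + e ≤ P) :
    weightedShift P s d * weightedShift P s e = weightedShift P s (d + e) := by
  ext i k
  have hi := i.isLt
  have hk := k.isLt
  -- the only column in which row `i` of `weightedShift P s d` is nonzero
  rw [Matrix.mul_apply,
    Finset.sum_eq_single ⟨if d ≤ i then i - d else i + P - d, by split_ifs <;> omega⟩]
  · simp only [weightedShift, Matrix.of_apply]
    split_ifs <;> first | omega | simp
  · rintro l - hl
    have := l.isLt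
    simp only [weightedShift, Matrix.of_apply]
    replace hl : (l : ℕ) ≠ if d ≤ i then i - d else i + P - d := fun h => hl (Fin.ext h)
    split_ifs at hl ⊢ <;> first | omega | simp
  · simp

theorem weightedShift_pow {d j : ℕ} (h : j * d ≤ P) :
    weightedShift P s d ^ j = weightedShift P s (j * d) := by
  induction j with
  | zero => simp [weightedShift_zero]
  | succ j ih =>
    rw [pow_succ, ih (by nlinarith), weightedShift_mul s (by nlinarith), add_one_mul]

end weightedShift

theorem transpose_weightedShift {R : Type*} [Field R] {P d : ℕ} {t : R} (ht : t ≠ 0)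
    (hd : d ≤ P) : (weightedShift P t d)ᵀ = t • weightedShift P t⁻¹ (P - d) := by
  ext i k
  have := i.isLt
  simp only [weightedShift, Matrix.transpose_apply, Matrix.of_apply, Matrix.smul_apply,
    smul_eq_mul, mul_ite, mul_one, mul_zero, mul_inv_cancel₀ ht]
  split_ifs <;> first | rfl | omega

theorem weightedShift_mul_transpose_inv {R : Type*} [Field R] {P d : ℕ} {s : R} (hs : s ≠ 0)
    (hd : d ≤ P) : weightedShift P s d * (weightedShift P s⁻¹ d)ᵀ = 1 := by
  rw [transpose_weightedShift (inv_ne_zero hs) hd, inv_inv, Matrix.mul_smul,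
    weightedShift_mul s (by omega), Nat.add_sub_cancel' hd, weightedShift_self, smul_smul,
    inv_mul_cancel₀ hs, one_smul]

theorem transpose_inv_mul_weightedShift {R : Type*} [Field R] {P d : ℕ} {s : R} (hs : s ≠ 0)
    (hd : d ≤ P) : (weightedShift P s⁻¹ d)ᵀ * weightedShift P s d = 1 := by
  rw [transpose_weightedShift (inv_ne_zero hs) hd, inv_inv, Matrix.smul_mul,
    weightedShift_mul s (by omega), Nat.sub_add_cancel hd, weightedShift_self, smul_smul,
    inv_mul_cancel₀ hs, one_smul]

theorem isCoprime_map_X_pow_sub_C {K F : Type*} [Field K] [Field F] [Algebra K F]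
    {f : K[X]} (hf : f ≠ 0) {s : F} (hs : Transcendental K s) (n : ℕ) :
    IsCoprime (f.map (algebraMap K F)) (X ^ n - C s) := by
  rw [isCoprime_iff_aeval_ne_zero_of_isAlgClosed F (AlgebraicClosure F)]
  intro x
  by_contra! ⟨hfx, hgx⟩
  have hx : IsAlgebraic K x := ⟨f, hf, by rwa [aeval_map_algebraMap] at hfx⟩
  have hxn : x ^ n = algebraMap F (AlgebraicClosure F) s := by
    simpa [sub_eq_zero] using hgx
  exact hs ((isAlgebraic_algebraMap_iff (algebraMap F _).injective).mp (hxn ▸ hx.pow n))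

theorem isUnit_aeval_of_pow_eq_algebraMap {K F A : Type*} [Field K] [Field F] [Ring A]
    [Algebra K F] [Algebra F A] [Algebra K A] [IsScalarTower K F A] {a : A} {n : ℕ} {s : F}
    (hs : Transcendental K s) (ha : a ^ n = algebraMap F A s) {f : K[X]} (hf : f ≠ 0) :
    IsUnit (aeval a f) := by
  obtain ⟨u, v, huv⟩ := isCoprime_map_X_pow_sub_C hf hs n
  have hinv : aeval a u * aeval a f = 1 := by
    simpa [aeval_map_algebraMap, ha] using congrArg (aeval a) huv
  have hcomm : Commute (aeval a u) (aeval a f) := by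
    simpa [aeval_map_algebraMap] using (Commute.all u (f.map (algebraMap K F))).map (aeval a)
  exact ⟨⟨aeval a f, aeval a u, hcomm.eq.symm.trans hinv, hinv⟩, rfl⟩

section laurentEval

open LaurentPolynomial

variable {K A : Type*} [CommSemiring K] [Semiring A] [Algebra K A] (u : Aˣ)

noncomputable def laurentEval : K[T;T⁻¹] →ₐ[K] A :=
  AddMonoidAlgebra.lift K A ℤ ((Units.coeHom A).comp (zpowersHom Aˣ u))

theorem laurentEval_ofCoeff (c : ℤ →₀ K) :
    laurentEval u (.ofCoeff c) = ∑ j ∈ c.support, c j • ((u ^ j : Aˣ) : A) :=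
  AddMonoidAlgebra.lift_apply _ _

theorem laurentEval_T (n : ℤ) : laurentEval u (T n : K[T;T⁻¹]) = ((u ^ n : Aˣ) : A) := by
  rw [laurentEval, T, AddMonoidAlgebra.lift_single, one_smul]
  rfl

theorem laurentEval_toLaurent (f : K[X]) : laurentEval u (toLaurent f) = aeval (u : A) f := by
  change ((laurentEval u).comp toLaurentAlg) f = _
  congr 1
  ext
  simp [laurentEval_T]

theorem isUnit_laurentEval (hu : ∀ f : K[X], f ≠ 0 → IsUnit (aeval (u : A) f))
    {q : K[T;T⁻¹]} (hq : q ≠ 0) : IsUnit (laurentEval u q) := by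
  obtain ⟨m, f, hf⟩ := exists_T_pow q
  have hf0 : f ≠ 0 := by
    rintro rfl
    exact hq ((isUnit_T (m : ℤ)).mul_left_eq_zero.mp (by simpa using hf.symm))
  have := hu f hf0
  rw [← laurentEval_toLaurent, hf, map_mul, laurentEval_T] at this
  exact (Units.isUnit_mul_units _ _).mp this

end laurentEval

theorem Units.val_zpow_eq_ite {M : Type*} [Monoid M] (u : Mˣ) (j : ℤ) :
    ((u ^ j : Mˣ) : M) = if 0 ≤ j then (u : M) ^ j.toNat else ((u⁻¹ : Mˣ) : M) ^ (-j).toNat := by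
  split_ifs with hj
  · lift j to ℕ using hj
    simp
  · obtain ⟨m, rfl⟩ : ∃ m : ℕ, j = -m := ⟨(-j).toNat, by omega⟩
    simp

/-- Let `K` be a field, `p ≥ 1`, `n ≥ 2`, `P = p·n`. The block
embedding `M_p(K[t^p, t^{-p}]) → M_P(K[t^P, t^{-P}])` sends `t^p·Id_p` to the
block matrix `C` with identity `p×p` blocks on the subdiagonal and `t^P·Id_p` in
the top-right block.  A nonzero Laurent polynomial `q(t) = ∑_j c_j (t^p)^j`
(encoded by its finitely supported coefficient function `c : ℤ →₀ K`) is sent to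
`∑_j c_j • C^j`, and this image is invertible over the rational function field
`K(t^P) ⊆ K(t)`.  Here `C` and its inverse `C⁻¹` (used for the negative powers)
are written entrywise, with `t = RatFunc.X`. -/
theorem image_of_nonzero_laurent_is_invertible (K : Type*) [Field K]
    (p nn : ℕ) (hp : 1 ≤ p) (hnn : 2 ≤ nn) (c : ℤ →₀ K) (hc : c ≠ 0) :
    IsUnit (∑ j ∈ c.support, c j •
      (if 0 ≤ j then
        (Matrix.of fun i k : Fin (p * nn) =>
          if (i : ℕ) = (k : ℕ) + p then (1 : RatFunc K)
          else if (i : ℕ) + p * nn = (k : ℕ) + p then RatFunc.X ^ (p * nn)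
          else 0) ^ j.toNat
      else
        (Matrix.of fun i k : Fin (p * nn) =>
          if (k : ℕ) = (i : ℕ) + p then (1 : RatFunc K)
          else if (k : ℕ) + p * nn = (i : ℕ) + p then (RatFunc.X ^ (p * nn))⁻¹
          else 0) ^ (-j).toNat)) := by
  set P := p * nn
  set s : RatFunc K := RatFunc.X ^ P
  have hP : 0 < P := Nat.mul_pos hp (by omega)
  have hs : s ≠ 0 := pow_ne_zero _ RatFunc.X_ne_zero
  have hpP : p ≤ P := Nat.le_mul_of_pos_right p (by omega)
  let u : (Matrix (Fin P) (Fin P) (RatFunc K))ˣ :=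
    ⟨weightedShift P s p, (weightedShift P s⁻¹ p)ᵀ,
      weightedShift_mul_transpose_inv hs hpP, transpose_inv_mul_weightedShift hs hpP⟩
  have hu : (u : Matrix (Fin P) (Fin P) (RatFunc K)) ^ nn = algebraMap _ _ s := by
    rw [Algebra.algebraMap_eq_smul_one, ← weightedShift_self, Units.val_mk,
      weightedShift_pow s (Nat.mul_comm nn p).le]
    exact congrArg (weightedShift P s) (Nat.mul_comm nn p)
  have hq : (.ofCoeff c : LaurentPolynomial K) ≠ 0 := fun h => hc congr(AddMonoidAlgebra.coeff $h)
  have hunit := isUnit_laurentEval u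
    (fun f hf => isUnit_aeval_of_pow_eq_algebraMap (RatFunc.transcendental_X.pow hP) hu hf) hq
  rw [laurentEval_ofCoeff] at hunit
  simp only [Units.val_zpow_eq_ite] at hunit
  -- the two block matrices of the statement are, definitionally, `u` and `u⁻¹`
  exact hunit
end
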